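/- Let λ > 0, 0 < c̄ < c_B, α ∈ (0,1), n_c ∈ (0,1). For each R > R₁ let (r(R), R̄(R), β(R)) denote the unique solution with 0 < r(R) < R of the system F(R̄, β) = 0, β = √n_c · tanh(√λ · r), r + R̄ = R. Then as R → +∞, r(R) → +∞ and R̄(R) → f(√n_c), where f(√n_c) > 0 is the unique positive root R̄ of F(R̄, √n_c) = 0. -/

import Mathlib

/-!
Write `h_β(t) = cosh t + β sinh t`, so that `F(R̄, β) = (c̄/c_B) h_β(√λ R̄) - h_β(a R̄)` with
`a = √λ (1 - α)`. For `0 ≤ β ≤ 1` and `t ≥ 0` we have `eᵗ/2 ≤ h_β(t) ≤ eᵗ`, so every root `R̄ ≥ 0`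
of `F(·, β)` is at most `log (2 c_B / c̄) / (√λ - a)`, uniformly in `β`. Hence `R̄(R)` stays bounded
and `r(R) = R - R̄(R) → ∞`, which forces `β(R) = √n_c tanh(√λ r(R)) → √n_c`.
Since `F` is affine in `β`, on the bounded range of `R̄(R)` the ratio `h_b(a R̄)/h_b(√λ R̄)` at
`b = √n_c` differs from `c̄/c_B` by `O(b - β(R))`. This ratio is strictly decreasing in `R̄ ≥ 0`
(the product formula `h_β(u) h_β(v) = ((1 + β²) cosh (u + v) + (1 - β²) cosh (u - v))/2
+ β sinh (u + v)` reduces this to the monotonicity of `cosh` and `sinh`) and equals `c̄/c_B` at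
`f(√n_c)`, so `R̄(R) → f(√n_c)`.
-/

/-- The transcendental function `F(R̄, β)` from the necrotic-core system. -/
noncomputable def Fnec (lam cbar cB alpha Rbar beta : ℝ) : ℝ :=
  cbar / cB * (Real.cosh (Real.sqrt lam * Rbar) + beta * Real.sinh (Real.sqrt lam * Rbar)) -
    (Real.cosh (Real.sqrt lam * (1 - alpha) * Rbar) +
      beta * Real.sinh (Real.sqrt lam * (1 - alpha) * Rbar))

open Real Filter Topology Set

lemma StrictAntiOn.tendsto_of_tendsto_comp {α β ι : Type*} [LinearOrder α] [TopologicalSpace α]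
    [OrderTopology α] [DenselyOrdered α] [NoMinOrder α] [NoMaxOrder α] [LinearOrder β]
    [TopologicalSpace β] [OrderTopology β] {f : α → β} {s : Set α} {y : α} {l : Filter ι}
    {x : ι → α} (hf : StrictAntiOn f s) (hs : s ∈ 𝓝 y) (hx : ∀ᶠ i in l, x i ∈ s)
    (h : Tendsto (f ∘ x) l (𝓝 (f y))) : Tendsto x l (𝓝 y) := by
  rw [tendsto_order] at h ⊢
  have hy : y ∈ s := mem_of_mem_nhds hs
  refine ⟨fun c hc => ?_, fun c hc => ?_⟩
  · obtain ⟨d, ⟨hcd, hdy⟩, hds⟩ :=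
      Filter.nonempty_of_mem (inter_mem (Ioo_mem_nhdsLT hc) (mem_nhdsWithin_of_mem_nhds hs))
    filter_upwards [h.2 (f d) (hf hds hy hdy), hx] with i hfi hxi
    exact lt_of_not_ge fun hic => (hf.antitoneOn hxi hds (hic.trans hcd.le)).not_gt hfi
  · obtain ⟨d, ⟨hyd, hdc⟩, hds⟩ :=
      Filter.nonempty_of_mem (inter_mem (Ioo_mem_nhdsGT hc) (mem_nhdsWithin_of_mem_nhds hs))
    filter_upwards [h.1 (f d) (hf hy hds hyd), hx] with i hfi hxi
    exact lt_of_not_ge fun hci => (hf.antitoneOn hds hxi (hdc.le.trans hci)).not_gt hfi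

lemma Real.tendsto_tanh_atTop : Tendsto tanh atTop (𝓝 1) := by
  have htanh : ∀ x, tanh x = (1 - exp (-2 * x)) / (1 + exp (-2 * x)) := fun x => by
    have hx : exp x * exp (-x) = 1 := by rw [← exp_add, add_neg_cancel, exp_zero]
    rw [tanh_eq_sinh_div_cosh, sinh_eq, cosh_eq, show -2 * x = -x + -x by ring, exp_add]
    field_simp
    linear_combination (2 * exp (-x)) * hx
  have hexp : Tendsto (fun x => exp (-2 * x)) atTop (𝓝 0) :=
    tendsto_exp_atBot.comp (tendsto_id.const_mul_atTop_of_neg (by norm_num))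
  have hlim : Tendsto (fun x => (1 - exp (-2 * x)) / (1 + exp (-2 * x))) atTop
      (𝓝 ((1 - 0) / (1 + 0))) :=
    (tendsto_const_nhds.sub hexp).div (tendsto_const_nhds.add hexp) (by norm_num)
  rw [funext htanh]
  simpa using hlim

lemma Real.tanh_nonneg {x : ℝ} (hx : 0 ≤ x) : 0 ≤ tanh x := by
  rw [tanh_eq_sinh_div_cosh]
  exact div_nonneg (sinh_nonneg_iff.2 hx) (cosh_pos x).le

noncomputable def coshAddMulSinh (β t : ℝ) : ℝ := cosh t + β * sinh t

lemma coshAddMulSinh_pos {β : ℝ} (hβ : |β| ≤ 1) (t : ℝ) : 0 < coshAddMulSinh β t := by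
  have hsinh : |sinh t| < cosh t :=
    abs_lt.2 ⟨by linarith [sinh_lt_cosh (-t), sinh_neg t, cosh_neg t], sinh_lt_cosh t⟩
  have : |β * sinh t| < cosh t := by
    rw [abs_mul]
    exact (mul_le_of_le_one_left (abs_nonneg _) hβ).trans_lt hsinh
  unfold coshAddMulSinh
  linarith [neg_abs_le (β * sinh t)]

lemma exp_div_two_le_coshAddMulSinh {β t : ℝ} (hβ : 0 ≤ β) (ht : 0 ≤ t) :
    exp t / 2 ≤ coshAddMulSinh β t := by
  have : 0 ≤ β * sinh t := mul_nonneg hβ (sinh_nonneg_iff.2 ht)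
  rw [coshAddMulSinh, cosh_eq]
  linarith [exp_pos (-t)]

lemma coshAddMulSinh_le_exp {β t : ℝ} (hβ : β ≤ 1) (ht : 0 ≤ t) :
    coshAddMulSinh β t ≤ exp t := by
  have : β * sinh t ≤ sinh t := mul_le_of_le_one_left (sinh_nonneg_iff.2 ht) hβ
  rw [coshAddMulSinh, ← cosh_add_sinh]
  linarith

lemma coshAddMulSinh_mul_coshAddMulSinh (β u v : ℝ) :
    coshAddMulSinh β u * coshAddMulSinh β v =
      ((1 + β ^ 2) * cosh (u + v) + (1 - β ^ 2) * cosh (u - v)) / 2 + β * sinh (u + v) := by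
  simp only [coshAddMulSinh, cosh_add, cosh_sub, sinh_add]
  ring

lemma coshAddMulSinh_mul_lt {β a s x y : ℝ} (hβ₀ : 0 ≤ β) (hβ₁ : β ≤ 1) (ha : 0 ≤ a)
    (has : a < s) (hx : 0 ≤ x) (hxy : x < y) :
    coshAddMulSinh β (a * y) * coshAddMulSinh β (s * x) <
      coshAddMulSinh β (a * x) * coshAddMulSinh β (s * y) := by
  have hsum : a * y + s * x < a * x + s * y := by nlinarith
  have hsum₀ : 0 ≤ a * y + s * x := by nlinarith
  have hcosh_sum : cosh (a * y + s * x) < cosh (a * x + s * y) := by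
    rw [cosh_lt_cosh, abs_of_nonneg hsum₀, abs_of_nonneg (by linarith)]
    exact hsum
  have hcosh_diff : cosh (a * y - s * x) ≤ cosh (a * x - s * y) := by
    rw [cosh_le_cosh, abs_of_nonpos (a := a * x - s * y) (by nlinarith), abs_le]
    constructor <;> nlinarith
  have hsinh_sum : sinh (a * y + s * x) ≤ sinh (a * x + s * y) := sinh_le_sinh.2 hsum.le
  rw [coshAddMulSinh_mul_coshAddMulSinh, coshAddMulSinh_mul_coshAddMulSinh]
  have h₁ := mul_lt_mul_of_pos_left hcosh_sum (by positivity : (0 : ℝ) < 1 + β ^ 2)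
  have h₂ := mul_le_mul_of_nonneg_left hcosh_diff (by nlinarith : (0 : ℝ) ≤ 1 - β ^ 2)
  have h₃ := mul_le_mul_of_nonneg_left hsinh_sum hβ₀
  linarith

lemma strictAntiOn_coshAddMulSinh_div {β a s : ℝ} (hβ₀ : 0 ≤ β) (hβ₁ : β ≤ 1) (ha : 0 ≤ a)
    (has : a < s) :
    StrictAntiOn (fun x => coshAddMulSinh β (a * x) / coshAddMulSinh β (s * x)) (Ici 0) := by
  intro x hx y _ hxy
  have hβ : |β| ≤ 1 := abs_le.2 ⟨by linarith, hβ₁⟩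
  rw [div_lt_div_iff₀ (coshAddMulSinh_pos hβ _) (coshAddMulSinh_pos hβ _)]
  exact coshAddMulSinh_mul_lt hβ₀ hβ₁ ha has hx hxy

lemma le_log_div_of_mul_coshAddMulSinh_eq {β a s q x : ℝ} (hβ₀ : 0 ≤ β) (hβ₁ : β ≤ 1)
    (ha : 0 ≤ a) (has : a < s) (hq : 0 < q) (hx : 0 ≤ x)
    (hroot : q * coshAddMulSinh β (s * x) = coshAddMulSinh β (a * x)) :
    x ≤ log (2 / q) / (s - a) := by
  have hlow := exp_div_two_le_coshAddMulSinh hβ₀ (by nlinarith : 0 ≤ s * x)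
  have hhigh := coshAddMulSinh_le_exp hβ₁ (mul_nonneg ha hx)
  have hexp : exp (s * x) * q ≤ 2 * exp (a * x) := by nlinarith
  rw [le_div_iff₀ (sub_pos.2 has), le_log_iff_exp_le (by positivity), le_div_iff₀ hq,
    show x * (s - a) = s * x - a * x by ring, exp_sub, div_mul_eq_mul_div, div_le_iff₀ (exp_pos _)]
  exact hexp

lemma tendsto_coshAddMulSinh_div_of_root {ι : Type*} {l : Filter ι} {a s q b M : ℝ}
    (hb : |b| ≤ 1) {x β : ι → ℝ} (hβ : Tendsto β l (𝓝 b)) (hx : ∀ᶠ i in l, x i ∈ Icc 0 M)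
    (hroot : ∀ᶠ i in l, q * coshAddMulSinh (β i) (s * x i) = coshAddMulSinh (β i) (a * x i)) :
    Tendsto (fun i => coshAddMulSinh b (a * x i) / coshAddMulSinh b (s * x i)) l (𝓝 q) := by
  set K : ℝ → ℝ := fun x => (sinh (a * x) - q * sinh (s * x)) / coshAddMulSinh b (s * x)
  have hK : Continuous K := by
    refine Continuous.div (by fun_prop) (by unfold coshAddMulSinh; fun_prop) fun x => ?_
    exact (coshAddMulSinh_pos hb _).ne'
  obtain ⟨C, hC⟩ := isCompact_Icc.exists_bound_of_continuousOn hK.continuousOn (s := Icc 0 M)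
  -- `F` is affine in `β`, so replacing `β i` by `b` in the root equation costs `(b - β i) K (x i)`.
  have hdiff : ∀ᶠ i in l, coshAddMulSinh b (a * x i) / coshAddMulSinh b (s * x i) - q =
      (b - β i) * K (x i) := by
    filter_upwards [hroot] with i hi
    rw [div_sub' (coshAddMulSinh_pos hb _).ne', mul_div_assoc']
    congr 1
    simp only [coshAddMulSinh] at hi ⊢
    linear_combination -hi
  refine tendsto_sub_nhds_zero_iff.1 (squeeze_zero_norm' (a := fun i => ‖b - β i‖ * C) ?_ ?_)
  · filter_upwards [hdiff, hx] with i hi hxi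
    rw [hi, norm_mul]
    exact mul_le_mul_of_nonneg_left (hC _ hxi) (norm_nonneg _)
  · simpa using ((tendsto_const_nhds (x := b)).sub hβ).norm.mul_const C

theorem stmt_10_general (lam cbar cB alpha n_c R₁ : ℝ) (hlam : 0 < lam) (hcbar : 0 < cbar)
    (hc : cbar < cB) (halpha : alpha ∈ Set.Ioo (0 : ℝ) 1) (hn_c : n_c ∈ Set.Ioo (0 : ℝ) 1)
    (r : ℝ → ℝ)
    (hr : ∀ R, R₁ < R → 0 < r R ∧ r R < R ∧
      Fnec lam cbar cB alpha (R - r R)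
        (Real.sqrt n_c * Real.tanh (Real.sqrt lam * r R)) = 0)
    (fstar : ℝ) (hfstarpos : 0 < fstar)
    (hfstar : Fnec lam cbar cB alpha fstar (Real.sqrt n_c) = 0) :
    Filter.Tendsto r Filter.atTop Filter.atTop ∧
    Filter.Tendsto (fun R => R - r R) Filter.atTop (nhds fstar) := by
  obtain ⟨hα₀, hα₁⟩ := halpha
  have hs : 0 < √lam := sqrt_pos.2 hlam
  have ha : 0 ≤ √lam * (1 - alpha) := mul_nonneg hs.le (by linarith)
  have has : √lam * (1 - alpha) < √lam := by nlinarith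
  have hb₁ : √n_c < 1 := (sqrt_lt_sqrt hn_c.1.le hn_c.2).trans_eq sqrt_one
  have hb : |√n_c| ≤ 1 := by rw [abs_of_nonneg (sqrt_nonneg n_c)]; exact hb₁.le
  have hq : 0 < cbar / cB := div_pos hcbar (hcbar.trans hc)
  set β : ℝ → ℝ := fun R => √n_c * tanh (√lam * r R)
  have hβ : ∀ R, R₁ < R → 0 ≤ β R ∧ β R ≤ 1 := fun R hR =>
    have htanh := tanh_nonneg (mul_pos hs (hr R hR).1).le
    ⟨mul_nonneg (sqrt_nonneg n_c) htanh, mul_le_one₀ hb₁.le htanh (tanh_lt_one _).le⟩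
  have hroot : ∀ R, R₁ < R → cbar / cB * coshAddMulSinh (β R) (√lam * (R - r R)) =
      coshAddMulSinh (β R) (√lam * (1 - alpha) * (R - r R)) := fun R hR =>
    sub_eq_zero.1 (hr R hR).2.2
  set M := log (2 / (cbar / cB)) / (√lam - √lam * (1 - alpha))
  have hRbar : ∀ R, R₁ < R → R - r R ∈ Icc 0 M := fun R hR =>
    ⟨by linarith [(hr R hR).2.1], le_log_div_of_mul_coshAddMulSinh_eq (hβ R hR).1 (hβ R hR).2
      ha has hq (by linarith [(hr R hR).2.1]) (hroot R hR)⟩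
  have hr_top : Tendsto r atTop atTop := by
    refine tendsto_atTop_mono' _ ?_ (tendsto_atTop_add_const_right _ (-M) tendsto_id)
    filter_upwards [eventually_gt_atTop R₁] with R hR
    show R + -M ≤ r R
    linarith [(hRbar R hR).2]
  have hβ_lim : Tendsto β atTop (𝓝 (√n_c)) := by
    simpa using (tendsto_tanh_atTop.comp (hr_top.const_mul_atTop hs)).const_mul √n_c
  have hfstar' : coshAddMulSinh √n_c (√lam * (1 - alpha) * fstar) /
      coshAddMulSinh √n_c (√lam * fstar) = cbar / cB := by
    rw [div_eq_iff (coshAddMulSinh_pos hb _).ne']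
    exact (sub_eq_zero.1 hfstar).symm
  have hanti := strictAntiOn_coshAddMulSinh_div (sqrt_nonneg n_c) hb₁.le ha has
  refine ⟨hr_top, hanti.tendsto_of_tendsto_comp (Ici_mem_nhds hfstarpos) ?_ ?_⟩
  · filter_upwards [eventually_gt_atTop R₁] with R hR using (hRbar R hR).1
  · rw [hfstar']
    exact tendsto_coshAddMulSinh_div_of_root hb hβ_lim ((eventually_gt_atTop R₁).mono hRbar)
      ((eventually_gt_atTop R₁).mono hroot)

/-- For `R > R₁`, let `r R` be the necrotic core radius solving the nonlinear system
(with `R̄ = R - r R` and `β = √n_c tanh(√λ r R)`).  Then as `R → +∞`, `r(R) → +∞` and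
`R̄(R) = R - r(R) → f(√n_c)`, where `f(√n_c) > 0` is the unique positive root `R̄` of
`F(R̄, √n_c) = 0`. -/
theorem stmt_10 (lam cbar cB alpha n_c R₁ : ℝ) (hlam : 0 < lam) (hcbar : 0 < cbar)
    (hc : cbar < cB) (halpha : alpha ∈ Set.Ioo (0 : ℝ) 1) (hn_c : n_c ∈ Set.Ioo (0 : ℝ) 1)
    (hR₁pos : 0 < R₁)
    (hR₁ : Real.cosh (Real.sqrt lam * (1 - alpha) * R₁) / Real.cosh (Real.sqrt lam * R₁)
      = cbar / cB)
    (r : ℝ → ℝ)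
    (hr : ∀ R, R₁ < R → 0 < r R ∧ r R < R ∧
      Fnec lam cbar cB alpha (R - r R)
        (Real.sqrt n_c * Real.tanh (Real.sqrt lam * r R)) = 0)
    (fstar : ℝ) (hfstarpos : 0 < fstar)
    (hfstar : Fnec lam cbar cB alpha fstar (Real.sqrt n_c) = 0) :
    Filter.Tendsto r Filter.atTop Filter.atTop ∧
    Filter.Tendsto (fun R => R - r R) Filter.atTop (nhds fstar) :=
  stmt_10_general lam cbar cB alpha n_c R₁ hlam hcbar hc halpha hn_c r hr fstar hfstarpos hfstar
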